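/- Theorem 2 (second bound). In the same setting, if H(q_1) ≤ H(q_2), then ℒ_{q_2} ≤ ℒ_{q_1} + D(q_1‖q_2) + D(q_1‖q̄_2). -/

import Mathlib

/-!
Write `P_S(x) = ∏_{R ∈ S} α_R(x)`. Since `P_ℛ₂ · P_{ℛ∖ℛ₂} = P_ℛ`, one gets
`ℒ_{q₂} = ln Z₂ + ln Z̄₂ + Σ q₂ ln q̄₂`, and the right-hand side collapses to
`ln Z₂ + ln Z̄₂ + Σ q₁ ln q₁`. The bound is then Gibbs' inequality `Σ q₂ ln q̄₂ ≤ Σ q₂ ln q₂`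
followed by the entropy hypothesis `-H(q₂) ≤ -H(q₁)`.
-/

open Finset Real

section Gibbs

variable {X : Type*} [Fintype X]

lemma sum_mul_log_le_sum_mul_log {p q : X → ℝ} (hp : ∀ x, 0 < p x) (hq : ∀ x, 0 < q x)
    (hsum : ∑ x, q x ≤ ∑ x, p x) :
    ∑ x, p x * log (q x) ≤ ∑ x, p x * log (p x) := by
  have pointwise : ∀ x, p x * log (q x) ≤ p x * log (p x) + (q x - p x) := fun x => by
    have h := mul_le_mul_of_nonneg_left
      (log_le_sub_one_of_pos (div_pos (hq x) (hp x))) (hp x).le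
    rw [log_div (hq x).ne' (hp x).ne', mul_sub_one, mul_div_cancel₀ _ (hp x).ne'] at h
    linarith
  calc ∑ x, p x * log (q x) ≤ ∑ x, (p x * log (p x) + (q x - p x)) :=
        sum_le_sum fun x _ => pointwise x
    _ ≤ ∑ x, p x * log (p x) := by
        rw [sum_add_distrib, sum_sub_distrib]
        linarith

lemma sum_mul_log_div {p q : X → ℝ} (hq : ∀ x, q x ≠ 0) :
    ∑ x, p x * log (p x / q x) = ∑ x, p x * log (p x) - ∑ x, p x * log (q x) := by
  rw [← sum_sub_distrib]
  refine sum_congr rfl fun x _ => ?_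
  rcases eq_or_ne (p x) 0 with h | h
  · simp [h]
  · rw [log_div h (hq x), mul_sub]

end Gibbs

section Normalization

variable {X : Type*} [Fintype X] [Nonempty X] {w q : X → ℝ} {Z : ℝ}

lemma normalizer_pos (hw : ∀ x, 0 < w x) (hZ : Z = ∑ x, w x) : 0 < Z :=
  hZ ▸ sum_pos (fun x _ => hw x) univ_nonempty

lemma normalized_pos (hw : ∀ x, 0 < w x) (hZ : Z = ∑ x, w x) (hq : ∀ x, q x = w x / Z)
    (x : X) : 0 < q x :=
  hq x ▸ div_pos (hw x) (normalizer_pos hw hZ)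

lemma sum_normalized (hw : ∀ x, 0 < w x) (hZ : Z = ∑ x, w x) (hq : ∀ x, q x = w x / Z) :
    ∑ x, q x = 1 := by
  simp only [hq, ← sum_div, ← hZ, div_self (normalizer_pos hw hZ).ne']

lemma sum_mul_log_normalized (hw : ∀ x, 0 < w x) (hZ : Z = ∑ x, w x)
    (hq : ∀ x, q x = w x / Z) {p : X → ℝ} (hp : ∑ x, p x = 1) :
    ∑ x, p x * log (q x) = ∑ x, p x * log (w x) - log Z := by
  have hZ₀ := (normalizer_pos hw hZ).ne'
  simp only [hq, log_div (hw _).ne' hZ₀, mul_sub, sum_sub_distrib, ← sum_mul, hp, one_mul]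

end Normalization

section ProductWeights

variable {X : Type*} {R : Type*} {α : R → X → ℝ}

lemma sum_sum_mul_log_eq_sum_mul_log_prod [Fintype X] (hα : ∀ r x, 0 < α r x) (S : Finset R)
    (p : X → ℝ) :
    ∑ r ∈ S, ∑ x, p x * log (α r x) = ∑ x, p x * log (∏ r ∈ S, α r x) := by
  rw [sum_comm]
  exact sum_congr rfl fun x _ => by rw [log_prod fun r _ => (hα r x).ne', mul_sum]

lemma log_prod_add_log_prod_compl [Fintype R] [DecidableEq R] (hα : ∀ r x, 0 < α r x)
    (T : Finset R) (x : X) :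
    log (∏ r ∈ T, α r x) + log (∏ r ∈ Tᶜ, α r x) = log (∏ r, α r x) := by
  rw [← log_mul (prod_pos fun r _ => hα r x).ne' (prod_pos fun r _ => hα r x).ne',
    prod_mul_prod_compl]

variable [Fintype X] [Nonempty X] [Fintype R] [DecidableEq R]
  {T : Finset R} {Z Zc : ℝ} {q qc : X → ℝ}

/-- `ℒ_q = E_q[ln P_ℛ] + H(q)`. -/
lemma log_add_sum_compl_eq_sum_mul_log_prod_sub (hα : ∀ r x, 0 < α r x)
    (hZ : Z = ∑ x, ∏ r ∈ T, α r x) (hq : ∀ x, q x = (∏ r ∈ T, α r x) / Z) :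
    log Z + ∑ r ∈ Tᶜ, ∑ x, q x * log (α r x)
      = ∑ x, q x * log (∏ r, α r x) - ∑ x, q x * log (q x) := by
  have hw : ∀ x, 0 < ∏ r ∈ T, α r x := fun x => prod_pos fun r _ => hα r x
  have hsplit : ∑ x, q x * log (∏ r, α r x)
      = ∑ x, q x * log (∏ r ∈ T, α r x) + ∑ x, q x * log (∏ r ∈ Tᶜ, α r x) := by
    simp only [← log_prod_add_log_prod_compl hα T, mul_add, sum_add_distrib]
  rw [sum_sum_mul_log_eq_sum_mul_log_prod hα, hsplit,
    sum_mul_log_normalized hw hZ hq (sum_normalized hw hZ hq)]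
  ring

lemma sum_mul_log_add_sum_mul_log_compl (hα : ∀ r x, 0 < α r x)
    (hZ : Z = ∑ x, ∏ r ∈ T, α r x) (hq : ∀ x, q x = (∏ r ∈ T, α r x) / Z)
    (hZc : Zc = ∑ x, ∏ r ∈ Tᶜ, α r x) (hqc : ∀ x, qc x = (∏ r ∈ Tᶜ, α r x) / Zc)
    {p : X → ℝ} (hp : ∑ x, p x = 1) :
    ∑ x, p x * log (q x) + ∑ x, p x * log (qc x)
      = ∑ x, p x * log (∏ r, α r x) - log Z - log Zc := by
  rw [sum_mul_log_normalized (fun x => prod_pos fun r _ => hα r x) hZ hq hp,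
    sum_mul_log_normalized (fun x => prod_pos fun r _ => hα r x) hZc hqc hp]
  simp only [← log_prod_add_log_prod_compl hα T, mul_add, sum_add_distrib]
  ring

lemma log_add_sum_compl_eq_log_add_log_add_sum_mul_log (hα : ∀ r x, 0 < α r x)
    (hZ : Z = ∑ x, ∏ r ∈ T, α r x) (hq : ∀ x, q x = (∏ r ∈ T, α r x) / Z)
    (hZc : Zc = ∑ x, ∏ r ∈ Tᶜ, α r x) (hqc : ∀ x, qc x = (∏ r ∈ Tᶜ, α r x) / Zc) :
    log Z + ∑ r ∈ Tᶜ, ∑ x, q x * log (α r x)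
      = log Z + log Zc + ∑ x, q x * log (qc x) := by
  have hw : ∀ x, 0 < ∏ r ∈ T, α r x := fun x => prod_pos fun r _ => hα r x
  rw [sum_sum_mul_log_eq_sum_mul_log_prod hα, sum_mul_log_normalized
    (fun x => prod_pos fun r _ => hα r x) hZc hqc (sum_normalized hw hZ hq)]
  ring

end ProductWeights

/-- Theorem 2, second bound: if `H(q1) ≤ H(q2)` then
`ℒ_{q2} ≤ ℒ_{q1} + D(q1‖q2) + D(q1‖q̄2)`. -/
theorem theorem2_second_bound {X : Type*} [Fintype X] [Nonempty X]
    {R : Type*} [Fintype R] [DecidableEq R] (α : R → X → ℝ) (hα : ∀ r x, 0 < α r x)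
    (T1 T2 : Finset R) (Z1 Z2 Z2bar : ℝ) (q1 q2 q2bar : X → ℝ)
    (hZ1 : Z1 = ∑ x, ∏ r ∈ T1, α r x)
    (hZ2 : Z2 = ∑ x, ∏ r ∈ T2, α r x)
    (hZ2bar : Z2bar = ∑ x, ∏ r ∈ T2ᶜ, α r x)
    (hq1 : ∀ x, q1 x = (∏ r ∈ T1, α r x) / Z1)
    (hq2 : ∀ x, q2 x = (∏ r ∈ T2, α r x) / Z2)
    (hq2bar : ∀ x, q2bar x = (∏ r ∈ T2ᶜ, α r x) / Z2bar)
    (hH : (-∑ x, q1 x * Real.log (q1 x)) ≤ -∑ x, q2 x * Real.log (q2 x)) :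
    Real.log Z2 + ∑ r ∈ T2ᶜ, ∑ x, q2 x * Real.log (α r x)
      ≤ (Real.log Z1 + ∑ r ∈ T1ᶜ, ∑ x, q1 x * Real.log (α r x))
        + (∑ x, q1 x * Real.log (q1 x / q2 x))
        + ∑ x, q1 x * Real.log (q1 x / q2bar x) := by
  have hw1 : ∀ x, 0 < ∏ r ∈ T1, α r x := fun x => prod_pos fun r _ => hα r x
  have hw2 : ∀ x, 0 < ∏ r ∈ T2, α r x := fun x => prod_pos fun r _ => hα r x
  have hw2bar : ∀ x, 0 < ∏ r ∈ T2ᶜ, α r x := fun x => prod_pos fun r _ => hα r x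
  have gibbs : ∑ x, q2 x * log (q2bar x) ≤ ∑ x, q2 x * log (q2 x) :=
    sum_mul_log_le_sum_mul_log (normalized_pos hw2 hZ2 hq2) (normalized_pos hw2bar hZ2bar hq2bar)
      (by rw [sum_normalized hw2 hZ2 hq2, sum_normalized hw2bar hZ2bar hq2bar])
  have cross := sum_mul_log_add_sum_mul_log_compl hα hZ2 hq2 hZ2bar hq2bar
    (sum_normalized hw1 hZ1 hq1)
  calc log Z2 + ∑ r ∈ T2ᶜ, ∑ x, q2 x * log (α r x)
      = log Z2 + log Z2bar + ∑ x, q2 x * log (q2bar x) :=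
        log_add_sum_compl_eq_log_add_log_add_sum_mul_log hα hZ2 hq2 hZ2bar hq2bar
    _ ≤ log Z2 + log Z2bar + ∑ x, q1 x * log (q1 x) := by linarith
    _ = _ := by
        rw [log_add_sum_compl_eq_sum_mul_log_prod_sub hα hZ1 hq1,
          sum_mul_log_div fun x => (normalized_pos hw2 hZ2 hq2 x).ne',
          sum_mul_log_div fun x => (normalized_pos hw2bar hZ2bar hq2bar x).ne']
        linarith
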